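/- arXiv:1706.10049 — 3 statements merged into one kernel-verified Lean document; each statement's English description precedes it below -/
import Mathlib

section
/- In any labelled Markov process with measurable singletons, if s and t are state-bisimilar then the Dirac measures δ_s and δ_t are subdistribution-bisimilar. -/
open MeasureTheory ProbabilityTheory Filter

/-- A (sub)distribution: a measure of total mass at most 1. -/
def IsSubdist {S : Type*} [MeasurableSpace S] (μ : Measure S) : Prop :=
  μ Set.univ ≤ 1

/-- A family of sub-Markov transition kernels (labelled Markov process). -/
def IsSubMarkov {S A : Type*} [MeasurableSpace S] (τ : A → Kernel S S) : Prop :=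
  ∀ a s, τ a s Set.univ ≤ 1

/-- One-step transition on subdistributions: μ →^a (step τ a μ). -/
noncomputable def step {S A : Type*} [MeasurableSpace S] (τ : A → Kernel S S)
    (a : A) (μ : Measure S) : Measure S :=
  μ.bind (τ a)

/-- Multi-step transition along a word. -/
noncomputable def wstep {S A : Type*} [MeasurableSpace S] (τ : A → Kernel S S) :
    List A → Measure S → Measure S
  | [], μ => μ
  | a :: w, μ => wstep τ w (step τ a μ)

/-- Subdistribution bisimulation relation. -/
def IsDBisim {S A : Type*} [MeasurableSpace S] (τ : A → Kernel S S)
    (R : Measure S → Measure S → Prop) : Prop :=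
  Symmetric R ∧
  (∀ μ ν, R μ ν → IsSubdist μ ∧ IsSubdist ν) ∧
  ∀ μ ν, R μ ν → μ Set.univ = ν Set.univ ∧ ∀ a, R (step τ a μ) (step τ a ν)

/-- Subdistribution bisimilarity. -/
def DBisim {S A : Type*} [MeasurableSpace S] (τ : A → Kernel S S)
    (μ ν : Measure S) : Prop :=
  ∃ R, IsDBisim τ R ∧ R μ ν

/-- The discounted trace pseudometric `d^c`. -/
noncomputable def dC {S A : Type*} [MeasurableSpace S] (τ : A → Kernel S S)
    (c : ℝ) (μ ν : Measure S) : ℝ :=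
  ⨆ w : List A, c ^ w.length *
    |(wstep τ w μ Set.univ).toReal - (wstep τ w ν Set.univ).toReal|

/-- A set is R-closed if it is closed under the relation R. -/
def RClosed {S : Type*} (R : S → S → Prop) (B : Set S) : Prop :=
  ∀ s t, s ∈ B → R s t → t ∈ B

/-- A state bisimulation: an equivalence relation such that related states have
equal transition probabilities to every measurable R-closed set. -/
def IsStateBisim {S A : Type*} [MeasurableSpace S] (τ : A → Kernel S S)
    (R : S → S → Prop) : Prop :=
  Equivalence R ∧
  ∀ s t, R s t → ∀ (a : A) (B : Set S), MeasurableSet B → RClosed R B →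
    τ a s B = τ a t B

open scoped ENNReal

/-!
A state bisimulation `R` lifts to subdistributions: relate `μ` and `ν` when both are
subdistributions and they agree on every measurable `R`-closed set. The lift is preserved by
each step because `x ↦ τ a x B` is constant on `R`-classes for closed `B`, so its integrals
against `μ` and `ν` coincide; and `δ_s`, `δ_t` are related since an `R`-closed set contains
`s` iff it contains `t`.
-/

theorem RClosed.univ {S : Type*} (R : S → S → Prop) : RClosed R Set.univ :=
  fun _ _ _ _ => trivial

section

variable {S A : Type*} [MeasurableSpace S]

def AgreeOnClosed (R : S → S → Prop) (μ ν : Measure S) : Prop :=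
  ∀ B, MeasurableSet B → RClosed R B → μ B = ν B

def SubdistLift (R : S → S → Prop) (μ ν : Measure S) : Prop :=
  IsSubdist μ ∧ IsSubdist ν ∧ AgreeOnClosed R μ ν

theorem AgreeOnClosed.symm {R : S → S → Prop} {μ ν : Measure S} (h : AgreeOnClosed R μ ν) :
    AgreeOnClosed R ν μ :=
  fun B hB hRB => (h B hB hRB).symm

theorem AgreeOnClosed.lintegral_eq {R : S → S → Prop} {μ ν : Measure S}
    (h : AgreeOnClosed R μ ν) {f : S → ℝ≥0∞} (hf : Measurable f)
    (hinv : ∀ x y, R x y → f x = f y) : ∫⁻ x, f x ∂μ = ∫⁻ x, f x ∂ν := by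
  have hmap : μ.map f = ν.map f := by
    ext E hE
    rw [Measure.map_apply hf hE, Measure.map_apply hf hE]
    exact h _ (hf hE) fun x y hx hxy => by rwa [Set.mem_preimage, ← hinv x y hxy]
  rw [← lintegral_map measurable_id' hf, ← lintegral_map measurable_id' hf, hmap]

theorem step_apply (τ : A → Kernel S S) (a : A) (μ : Measure S) {B : Set S}
    (hB : MeasurableSet B) : step τ a μ B = ∫⁻ x, τ a x B ∂μ :=
  Measure.bind_apply hB (τ a).aemeasurable

theorem AgreeOnClosed.step {R : S → S → Prop} {μ ν : Measure S} (h : AgreeOnClosed R μ ν)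
    (τ : A → Kernel S S) (a : A)
    (hτR : ∀ x y, R x y → ∀ B, MeasurableSet B → RClosed R B → τ a x B = τ a y B) :
    AgreeOnClosed R (step τ a μ) (step τ a ν) := by
  intro B hB hRB
  rw [step_apply τ a μ hB, step_apply τ a ν hB]
  exact h.lintegral_eq ((τ a).measurable_coe hB) fun x y hxy => hτR x y hxy B hB hRB

theorem IsSubdist.step {τ : A → Kernel S S} (hτ : IsSubMarkov τ) (a : A) {μ : Measure S}
    (hμ : IsSubdist μ) : IsSubdist (step τ a μ) := by
  rw [IsSubdist, step_apply τ a μ MeasurableSet.univ]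
  calc ∫⁻ x, τ a x Set.univ ∂μ ≤ ∫⁻ _, 1 ∂μ := lintegral_mono fun x => hτ a x
    _ = μ Set.univ := by simp
    _ ≤ 1 := hμ

theorem isSubdist_dirac (s : S) : IsSubdist (Measure.dirac s) :=
  prob_le_one

theorem agreeOnClosed_dirac {R : S → S → Prop} {s t : S} (hst : R s t) (hts : R t s) :
    AgreeOnClosed R (Measure.dirac s) (Measure.dirac t) := by
  intro B hB hRB
  have hmem : s ∈ B ↔ t ∈ B := ⟨fun hs => hRB s t hs hst, fun ht => hRB t s ht hts⟩
  rw [Measure.dirac_apply' _ hB, Measure.dirac_apply' _ hB]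
  by_cases hs : s ∈ B
  · simp [hs, hmem.mp hs]
  · simp [hs, mt hmem.mpr hs]

theorem isDBisim_subdistLift {τ : A → Kernel S S} (hτ : IsSubMarkov τ) {R : S → S → Prop}
    (hτR : ∀ x y, R x y → ∀ a B, MeasurableSet B → RClosed R B → τ a x B = τ a y B) :
    IsDBisim τ (SubdistLift R) := by
  refine ⟨fun μ ν ⟨hμ, hν, h⟩ => ⟨hν, hμ, h.symm⟩, fun μ ν ⟨hμ, hν, _⟩ => ⟨hμ, hν⟩, ?_⟩
  rintro μ ν ⟨hμ, hν, h⟩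
  refine ⟨h _ MeasurableSet.univ (RClosed.univ R), fun a => ?_⟩
  exact ⟨hμ.step hτ a, hν.step hτ a, h.step τ a fun x y hxy => hτR x y hxy a⟩

end

theorem state_bisim_implies_dbisim_general {S A : Type*} [MeasurableSpace S]
    (τ : A → Kernel S S) (hτ : IsSubMarkov τ) (s t : S)
    (h : ∃ R, IsStateBisim τ R ∧ R s t) :
    DBisim τ (Measure.dirac s) (Measure.dirac t) := by
  obtain ⟨R, ⟨hequiv, hτR⟩, hst⟩ := h
  exact ⟨SubdistLift R, isDBisim_subdistLift hτ hτR,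
    isSubdist_dirac s, isSubdist_dirac t, agreeOnClosed_dirac hst (hequiv.symm hst)⟩

/-- State bisimilarity implies subdistribution bisimilarity of the Dirac measures. -/
theorem state_bisim_implies_dbisim {S A : Type*} [MeasurableSpace S]
    [MeasurableSingletonClass S]
    (τ : A → Kernel S S) (hτ : IsSubMarkov τ) (s t : S)
    (h : ∃ R, IsStateBisim τ R ∧ R s t) :
    DBisim τ (Measure.dirac s) (Measure.dirac t) :=
  state_bisim_implies_dbisim_general τ hτ s t h
end

section
/- Let R be an equivalence relation on a measurable space (S,Σ), let f : S → [0,1] be measurable and constant on each R-equivalence class in the sense that f(s) = f(t) whenever s R t, and let μ, ν be subprobability measures agreeing on all measurable R-closed sets. Then ∫ f dμ = ∫ f dν. -/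
open MeasureTheory

section

variable {S β : Type*} {R : S → S → Prop} {f : S → β}

theorem rclosed_preimage_of_invariant (hconst : ∀ s t, R s t → f s = f t) (A : Set β) :
    RClosed R (f ⁻¹' A) :=
  fun s t hs hst => by rwa [Set.mem_preimage, ← hconst s t hst]

theorem map_eq_of_agree_on_rclosed [MeasurableSpace S] [MeasurableSpace β] {μ ν : Measure S}
    (hf : Measurable f) (hconst : ∀ s t, R s t → f s = f t)
    (hagree : ∀ B : Set S, MeasurableSet B → RClosed R B → μ B = ν B) :
    μ.map f = ν.map f := by
  ext A hA
  rw [Measure.map_apply hf hA, Measure.map_apply hf hA]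
  exact hagree _ (hf hA) (rclosed_preimage_of_invariant hconst A)

end

theorem lintegral_eq_of_agree_on_rclosed_general {S : Type*} [MeasurableSpace S]
    (R : S → S → Prop)
    (f : S → ENNReal) (hf : Measurable f)
    (hconst : ∀ s t, R s t → f s = f t)
    (μ ν : Measure S)
    (hagree : ∀ B : Set S, MeasurableSet B → RClosed R B → μ B = ν B) :
    ∫⁻ s, f s ∂μ = ∫⁻ s, f s ∂ν := by
  calc ∫⁻ s, f s ∂μ = ∫⁻ x, x ∂(μ.map f) := (lintegral_map measurable_id hf).symm
    _ = ∫⁻ x, x ∂(ν.map f) := by rw [map_eq_of_agree_on_rclosed hf hconst hagree]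
    _ = ∫⁻ s, f s ∂ν := lintegral_map measurable_id hf

/-- If f : S → [0,1] is measurable and constant on R-equivalence classes, and the
subprobability measures μ and ν agree on all measurable R-closed sets, then the
integrals of f agree. -/
theorem lintegral_eq_of_agree_on_rclosed {S : Type*} [MeasurableSpace S]
    (R : S → S → Prop) (hR : Equivalence R)
    (f : S → ENNReal) (hf : Measurable f) (hf1 : ∀ s, f s ≤ 1)
    (hconst : ∀ s t, R s t → f s = f t)
    (μ ν : Measure S) (hμ : μ Set.univ ≤ 1) (hν : ν Set.univ ≤ 1)
    (hagree : ∀ B : Set S, MeasurableSet B → RClosed R B → μ B = ν B) :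
    ∫⁻ s, f s ∂μ = ∫⁻ s, f s ∂ν :=
  lintegral_eq_of_agree_on_rclosed_general R f hf hconst μ ν hagree
end

section
/- If d^c(π₁, π₁') ≤ ε₁ and d^c(π₂, π₂') ≤ ε₂ with ε₁, ε₂ ∈ [0,1], then the product (parallel composition) satisfies d^c(π₁ × π₂, π₁' × π₂') ≤ ε₁ + ε₂ − ε₁ε₂, where the product LMP has transitions τ_a((s₁,s₂), ·) = τ_a¹(s₁,·) × τ_a²(s₂,·). -/
open MeasureTheory ProbabilityTheory Filter

/-- The product (parallel composition) kernel of two labelled Markov processes. -/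
noncomputable def prodKernel {S₁ S₂ A : Type*} [MeasurableSpace S₁] [MeasurableSpace S₂]
    (τ₁ : A → Kernel S₁ S₁) (τ₂ : A → Kernel S₂ S₂)
    [∀ a, IsSFiniteKernel (τ₁ a)] [∀ a, IsSFiniteKernel (τ₂ a)] :
    A → Kernel (S₁ × S₂) (S₁ × S₂) :=
  fun a => ((τ₁ a).comap Prod.fst measurable_fst).prod ((τ₂ a).comap Prod.snd measurable_snd)

/-!
Along every word `w` the composed process started in `μ × ν` is at the product of the two
component runs, since parallel composition of kernels commutes with products of s-finite
measures; hence its trace mass is the product `p₁ p₂` of the component masses. For masses in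
`[0, 1]`, `|p₁ p₂ - q₁ q₂| ≤ δ₁ + δ₂ - δ₁ δ₂` with `δᵢ = |pᵢ - qᵢ|`. Discounting by
`t = c ^ |w| ≤ 1` preserves this shape, and `x + y - x y = 1 - (1 - x) (1 - y)` is monotone in
each argument below `1`, so the component bounds `t δᵢ ≤ εᵢ` give the claim word by word.
-/

section Arithmetic

theorem abs_mul_sub_mul_le_of_mem_Icc {p₁ p₂ q₁ q₂ : ℝ}
    (hp₁ : p₁ ∈ Set.Icc (0 : ℝ) 1) (hp₂ : p₂ ∈ Set.Icc (0 : ℝ) 1)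
    (hq₁ : q₁ ∈ Set.Icc (0 : ℝ) 1) (hq₂ : q₂ ∈ Set.Icc (0 : ℝ) 1) :
    |p₁ * p₂ - q₁ * q₂| ≤ |p₁ - q₁| + |p₂ - q₂| - |p₁ - q₁| * |p₂ - q₂| := by
  obtain ⟨hp₁₀, hp₁₁⟩ := hp₁
  obtain ⟨hp₂₀, hp₂₁⟩ := hp₂
  obtain ⟨hq₁₀, hq₁₁⟩ := hq₁
  obtain ⟨hq₂₀, hq₂₁⟩ := hq₂
  rcases abs_cases (p₁ - q₁) with ⟨h₁, hs₁⟩ | ⟨h₁, hs₁⟩ <;>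
    rcases abs_cases (p₂ - q₂) with ⟨h₂, hs₂⟩ | ⟨h₂, hs₂⟩ <;>
    rw [h₁, h₂, abs_le] <;> constructor <;>
    nlinarith [mul_nonneg hp₁₀ hp₂₀, mul_nonneg hq₁₀ hq₂₀, mul_nonneg hp₁₀ hq₂₀,
      mul_nonneg hq₁₀ hp₂₀, mul_nonneg (sub_nonneg.2 hp₁₁) (sub_nonneg.2 hq₂₁),
      mul_nonneg (sub_nonneg.2 hq₁₁) (sub_nonneg.2 hp₂₁)]

theorem add_sub_mul_le_add_sub_mul {x y a b : ℝ} (hx : x ≤ a) (hy : y ≤ b)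
    (ha : a ≤ 1) (hb : b ≤ 1) : x + y - x * y ≤ a + b - a * b := by
  have : (1 - a) * (1 - b) ≤ (1 - x) * (1 - y) :=
    mul_le_mul (by linarith) (by linarith) (by linarith) (by linarith)
  linarith

theorem mul_add_sub_mul_le {t x y : ℝ} (ht₀ : 0 ≤ t) (ht₁ : t ≤ 1) (hx : 0 ≤ x) (hy : 0 ≤ y) :
    t * (x + y - x * y) ≤ t * x + t * y - t * x * (t * y) := by
  have : 0 ≤ t * x * y * (1 - t) := mul_nonneg (by positivity) (sub_nonneg.2 ht₁)
  nlinarith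

theorem mul_abs_mul_sub_mul_le {t p₁ p₂ q₁ q₂ ε₁ ε₂ : ℝ} (ht₀ : 0 ≤ t) (ht₁ : t ≤ 1)
    (hp₁ : p₁ ∈ Set.Icc (0 : ℝ) 1) (hp₂ : p₂ ∈ Set.Icc (0 : ℝ) 1)
    (hq₁ : q₁ ∈ Set.Icc (0 : ℝ) 1) (hq₂ : q₂ ∈ Set.Icc (0 : ℝ) 1)
    (h₁ : t * |p₁ - q₁| ≤ ε₁) (h₂ : t * |p₂ - q₂| ≤ ε₂) (hε₁ : ε₁ ≤ 1) (hε₂ : ε₂ ≤ 1) :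
    t * |p₁ * p₂ - q₁ * q₂| ≤ ε₁ + ε₂ - ε₁ * ε₂ :=
  calc t * |p₁ * p₂ - q₁ * q₂|
      ≤ t * (|p₁ - q₁| + |p₂ - q₂| - |p₁ - q₁| * |p₂ - q₂|) :=
        mul_le_mul_of_nonneg_left (abs_mul_sub_mul_le_of_mem_Icc hp₁ hp₂ hq₁ hq₂) ht₀
    _ ≤ t * |p₁ - q₁| + t * |p₂ - q₂| - t * |p₁ - q₁| * (t * |p₂ - q₂|) :=
        mul_add_sub_mul_le ht₀ ht₁ (abs_nonneg _) (abs_nonneg _)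
    _ ≤ ε₁ + ε₂ - ε₁ * ε₂ := add_sub_mul_le_add_sub_mul h₁ h₂ hε₁ hε₂

end Arithmetic

section Transition

variable {S A : Type*} [MeasurableSpace S] {τ : A → Kernel S S} {μ : Measure S}

theorem IsSubdist.isFiniteMeasure (hμ : IsSubdist μ) : IsFiniteMeasure μ :=
  ⟨hμ.trans_lt ENNReal.one_lt_top⟩

theorem IsSubdist.toReal_mem_Icc (hμ : IsSubdist μ) : (μ Set.univ).toReal ∈ Set.Icc (0 : ℝ) 1 :=
  ⟨ENNReal.toReal_nonneg, by simpa using ENNReal.toReal_mono ENNReal.one_ne_top hμ⟩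

theorem IsSubMarkov.step_apply_univ_le (hτ : IsSubMarkov τ) (a : A) (μ : Measure S) :
    step τ a μ Set.univ ≤ μ Set.univ := by
  rw [step, Measure.bind_apply MeasurableSet.univ (τ a).aemeasurable]
  calc ∫⁻ s, τ a s Set.univ ∂μ ≤ ∫⁻ _, 1 ∂μ := lintegral_mono (hτ a)
    _ = μ Set.univ := by simp

theorem IsSubdist.wstep (hμ : IsSubdist μ) (hτ : IsSubMarkov τ) (w : List A) :
    IsSubdist (wstep τ w μ) := by
  induction w generalizing μ with
  | nil => exact hμ
  | cons a w ih => exact ih ((hτ.step_apply_univ_le a μ).trans hμ)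

theorem bddAbove_range_dC (hτ : IsSubMarkov τ) {c : ℝ} (hc₀ : 0 ≤ c) (hc₁ : c ≤ 1)
    {ν : Measure S} (hμ : IsSubdist μ) (hν : IsSubdist ν) :
    BddAbove (Set.range fun w : List A =>
      c ^ w.length * |(wstep τ w μ Set.univ).toReal - (wstep τ w ν Set.univ).toReal|) := by
  refine ⟨1, Set.forall_mem_range.2 fun w => ?_⟩
  obtain ⟨hμ₀, hμ₁⟩ := (hμ.wstep hτ w).toReal_mem_Icc
  obtain ⟨hν₀, hν₁⟩ := (hν.wstep hτ w).toReal_mem_Icc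
  exact mul_le_one₀ (pow_le_one₀ hc₀ hc₁) (abs_nonneg _)
    (abs_sub_le_of_nonneg_of_le hμ₀ hμ₁ hν₀ hν₁)

theorem le_dC (hτ : IsSubMarkov τ) {c : ℝ} (hc₀ : 0 ≤ c) (hc₁ : c ≤ 1) {ν : Measure S}
    (hμ : IsSubdist μ) (hν : IsSubdist ν) (w : List A) :
    c ^ w.length * |(wstep τ w μ Set.univ).toReal - (wstep τ w ν Set.univ).toReal| ≤
      dC τ c μ ν :=
  le_ciSup (bddAbove_range_dC hτ hc₀ hc₁ hμ hν) w

instance step.instSFinite [∀ a, IsSFiniteKernel (τ a)] (a : A) (μ : Measure S) [SFinite μ] :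
    SFinite (step τ a μ) :=
  inferInstanceAs (SFinite (τ a ∘ₘ μ))

instance wstep.instSFinite [∀ a, IsSFiniteKernel (τ a)] (w : List A) (μ : Measure S)
    [SFinite μ] : SFinite (wstep τ w μ) := by
  induction w generalizing μ with
  | nil => assumption
  | cons a w ih => exact ih _

end Transition

theorem MeasureTheory.Measure.parallelComp_comp_prod {X₁ X₂ Y₁ Y₂ : Type*}
    [MeasurableSpace X₁] [MeasurableSpace X₂] [MeasurableSpace Y₁] [MeasurableSpace Y₂]
    {κ : Kernel X₁ Y₁} {η : Kernel X₂ Y₂} [IsSFiniteKernel κ] [IsSFiniteKernel η]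
    {μ : Measure X₁} {ν : Measure X₂} [SFinite μ] [SFinite ν] :
    (κ ∥ₖ η) ∘ₘ μ.prod ν = (κ ∘ₘ μ).prod (η ∘ₘ ν) := by
  rw [← Kernel.id_parallelComp_comp_parallelComp_id, ← Measure.comp_assoc,
    ← Measure.prod_comp_left, ← Measure.prod_comp_right]

section Product

variable {S₁ S₂ A : Type*} [MeasurableSpace S₁] [MeasurableSpace S₂]
  {τ₁ : A → Kernel S₁ S₁} {τ₂ : A → Kernel S₂ S₂}
  [∀ a, IsSFiniteKernel (τ₁ a)] [∀ a, IsSFiniteKernel (τ₂ a)]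

theorem prodKernel_eq_parallelComp (a : A) : prodKernel τ₁ τ₂ a = τ₁ a ∥ₖ τ₂ a := by
  ext p : 1
  rw [prodKernel, Kernel.prod_apply, Kernel.parallelComp_apply, Kernel.comap_apply,
    Kernel.comap_apply]

variable {μ : Measure S₁} {ν : Measure S₂} [SFinite μ] [SFinite ν]

theorem step_prodKernel_prod (a : A) :
    step (prodKernel τ₁ τ₂) a (μ.prod ν) = (step τ₁ a μ).prod (step τ₂ a ν) := by
  rw [step, prodKernel_eq_parallelComp, Measure.parallelComp_comp_prod]
  rfl

theorem wstep_prodKernel_prod (w : List A) :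
    wstep (prodKernel τ₁ τ₂) w (μ.prod ν) = (wstep τ₁ w μ).prod (wstep τ₂ w ν) := by
  induction w generalizing μ ν with
  | nil => rfl
  | cons a w ih => rw [wstep, step_prodKernel_prod, ih]; rfl

theorem wstep_prodKernel_prod_apply_univ (w : List A) :
    wstep (prodKernel τ₁ τ₂) w (μ.prod ν) Set.univ =
      wstep τ₁ w μ Set.univ * wstep τ₂ w ν Set.univ := by
  rw [wstep_prodKernel_prod, ← Set.univ_prod_univ, Measure.prod_prod]

end Product

theorem dC_compositional_general {S₁ S₂ A : Type*} [MeasurableSpace S₁] [MeasurableSpace S₂]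
    (τ₁ : A → Kernel S₁ S₁) (τ₂ : A → Kernel S₂ S₂)
    [∀ a, IsSFiniteKernel (τ₁ a)] [∀ a, IsSFiniteKernel (τ₂ a)]
    (hτ₁ : IsSubMarkov τ₁) (hτ₂ : IsSubMarkov τ₂)
    (c : ℝ) (hc : c ∈ Set.Ioc (0:ℝ) 1)
    (π₁ π₁' : Measure S₁) (π₂ π₂' : Measure S₂)
    (hπ₁ : IsSubdist π₁) (hπ₁' : IsSubdist π₁')
    (hπ₂ : IsSubdist π₂) (hπ₂' : IsSubdist π₂')
    (ε₁ ε₂ : ℝ) (hε₁ : ε₁ ∈ Set.Icc (0:ℝ) 1) (hε₂ : ε₂ ∈ Set.Icc (0:ℝ) 1)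
    (h₁ : dC τ₁ c π₁ π₁' ≤ ε₁) (h₂ : dC τ₂ c π₂ π₂' ≤ ε₂) :
    dC (prodKernel τ₁ τ₂) c (π₁.prod π₂) (π₁'.prod π₂') ≤ ε₁ + ε₂ - ε₁ * ε₂ := by
  obtain ⟨hc₀, hc₁⟩ := hc
  have := hπ₁.isFiniteMeasure
  have := hπ₁'.isFiniteMeasure
  have := hπ₂.isFiniteMeasure
  have := hπ₂'.isFiniteMeasure
  refine ciSup_le fun w => ?_
  rw [wstep_prodKernel_prod_apply_univ, wstep_prodKernel_prod_apply_univ, ENNReal.toReal_mul,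
    ENNReal.toReal_mul]
  exact mul_abs_mul_sub_mul_le (pow_nonneg hc₀.le _) (pow_le_one₀ hc₀.le hc₁)
    (hπ₁.wstep hτ₁ w).toReal_mem_Icc (hπ₂.wstep hτ₂ w).toReal_mem_Icc
    (hπ₁'.wstep hτ₁ w).toReal_mem_Icc (hπ₂'.wstep hτ₂ w).toReal_mem_Icc
    ((le_dC hτ₁ hc₀.le hc₁ hπ₁ hπ₁' w).trans h₁) ((le_dC hτ₂ hc₀.le hc₁ hπ₂ hπ₂' w).trans h₂)
    hε₁.2 hε₂.2

/-- Compositionality: approximate bisimilarity of components bounds the distance of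
the composed processes by ε₁ + ε₂ − ε₁ε₂. -/
theorem dC_compositional {S₁ S₂ A : Type*} [MeasurableSpace S₁] [MeasurableSpace S₂]
    (τ₁ : A → Kernel S₁ S₁) (τ₂ : A → Kernel S₂ S₂)
    [∀ a, IsSFiniteKernel (τ₁ a)] [∀ a, IsSFiniteKernel (τ₂ a)]
    (hτ₁ : IsSubMarkov τ₁) (hτ₂ : IsSubMarkov τ₂)
    (c : ℝ) (hc : c ∈ Set.Ioc (0:ℝ) 1)
    (π₁ π₁' : Measure S₁) (π₂ π₂' : Measure S₂)
    [SFinite π₂] [SFinite π₂']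
    (hπ₁ : IsSubdist π₁) (hπ₁' : IsSubdist π₁')
    (hπ₂ : IsSubdist π₂) (hπ₂' : IsSubdist π₂')
    (ε₁ ε₂ : ℝ) (hε₁ : ε₁ ∈ Set.Icc (0:ℝ) 1) (hε₂ : ε₂ ∈ Set.Icc (0:ℝ) 1)
    (h₁ : dC τ₁ c π₁ π₁' ≤ ε₁) (h₂ : dC τ₂ c π₂ π₂' ≤ ε₂) :
    dC (prodKernel τ₁ τ₂) c (π₁.prod π₂) (π₁'.prod π₂') ≤ ε₁ + ε₂ - ε₁ * ε₂ :=
  dC_compositional_general τ₁ τ₂ hτ₁ hτ₂ c hc π₁ π₁' π₂ π₂' hπ₁ hπ₁' hπ₂ hπ₂' ε₁ ε₂ hε₁ hε₂ h₁ h₂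
end
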